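/- arXiv:0808.2626 — 5 statements merged into one kernel-verified Lean document; each statement's English description precedes it below -/
import Mathlib

section
/- Let a ≥ 4 and let α_1,…,α_a ≥ 2 be integers. Then there exist infinitely many tuples of nonnegative integers (n_{j,k}) for 1 ≤ k ≤ a, 1 ≤ j ≤ α_k, together with positive integers d, such that for every k, d = Σ_{j=1}^{α_k} j·n_{j,k}, and Σ_{k=1}^{a} Σ_{j=1}^{α_k} (j−1)·n_{j,k} = 2d−2. -/
/-!
Take degree `d = 2t + 2`. Over two of the points every preimage is a double point, over two more
there are `t` double and `2` simple points, and the remaining fibres are unramified. Only local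
degrees `1` and `2` occur, so the bounds `α k ≥ 2` are respected, and the total ramification is
`2(t + 1) + 2t = 2d - 2`. Distinct `t` give distinct degrees.
-/

open Finset

/-- `j ↦ n_j`, the number of points of local degree `j`, for a fibre with `s` simple and `e` double
points. -/
def simpleDouble (s e : ℕ) : ℕ → ℕ := fun j => if j = 1 then s else if j = 2 then e else 0

lemma eq_one_or_eq_two_of_simpleDouble_ne_zero {s e j : ℕ} (h : simpleDouble s e j ≠ 0) :
    j = 1 ∨ j = 2 := by
  unfold simpleDouble at h
  split_ifs at h <;> simp_all

lemma sum_Icc_mul_simpleDouble {A : ℕ} (hA : 2 ≤ A) (g : ℕ → ℕ) (s e : ℕ) :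
    ∑ j ∈ Icc 1 A, g j * simpleDouble s e j = g 1 * s + g 2 * e := by
  rw [sum_eq_add_of_mem 1 2 (by simp; omega) (by simp; omega) (by decide)]
  · simp [simpleDouble]
  · intro j _ hj
    simp [simpleDouble, hj.1, hj.2]

def numDouble (t k : ℕ) : ℕ := if k < 2 then t + 1 else if k < 4 then t else 0

def numSimple (t k : ℕ) : ℕ := if k < 2 then 0 else if k < 4 then 2 else 2 * t + 2

lemma numSimple_add_two_mul_numDouble (t k : ℕ) :
    numSimple t k + 2 * numDouble t k = 2 * t + 2 := by
  unfold numSimple numDouble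
  split_ifs <;> omega

lemma sum_range_numDouble {a : ℕ} (ha : 4 ≤ a) (t : ℕ) :
    ∑ k ∈ range a, numDouble t k = 4 * t + 2 := by
  obtain ⟨b, rfl⟩ := Nat.exists_eq_add_of_le ha
  have unramified : ∑ k ∈ range b, numDouble t (4 + k) = 0 :=
    sum_eq_zero fun k _ => by simp [numDouble]; omega
  rw [sum_range_add, unramified]
  simp [sum_range_succ, numDouble]
  omega

def branchingData (a t : ℕ) : ℕ → ℕ → ℕ := fun k =>
  if k < a then simpleDouble (numSimple t k) (numDouble t k) else 0

def IsBranchingData (a : ℕ) (α : ℕ → ℕ) (d : ℕ) (n : ℕ → ℕ → ℕ) : Prop :=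
  1 ≤ d ∧
  (∀ k j, n k j ≠ 0 → k < a ∧ 1 ≤ j ∧ j ≤ α k) ∧
  (∀ k < a, d = ∑ j ∈ Icc 1 (α k), j * n k j) ∧
  (∑ k ∈ range a, ∑ j ∈ Icc 1 (α k), (j - 1) * n k j) = 2 * d - 2

lemma isBranchingData_branchingData {a : ℕ} (ha : 4 ≤ a) {α : ℕ → ℕ} (hα : ∀ k < a, 2 ≤ α k)
    (t : ℕ) : IsBranchingData a α (2 * t + 2) (branchingData a t) := by
  have fibre_sum (g : ℕ → ℕ) {k : ℕ} (hk : k < a) :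
      ∑ j ∈ Icc 1 (α k), g j * branchingData a t k j =
        g 1 * numSimple t k + g 2 * numDouble t k := by
    simp only [branchingData, if_pos hk]
    exact sum_Icc_mul_simpleDouble (hα k hk) g _ _
  refine ⟨by omega, fun k j hn => ?_, fun k hk => ?_, ?_⟩
  · by_cases hk : k < a
    · simp only [branchingData, if_pos hk] at hn
      have := hα k hk
      rcases eq_one_or_eq_two_of_simpleDouble_ne_zero hn with rfl | rfl <;> omega
    · simp [branchingData, hk] at hn
  · have degree := fibre_sum (fun j => j) hk
    simp only [one_mul] at degree
    rw [degree, numSimple_add_two_mul_numDouble]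
  · rw [sum_congr rfl fun k hk => fibre_sum (· - 1) (mem_range.mp hk)]
    simp only [Nat.sub_self, zero_mul, zero_add, Nat.add_one_sub_one, one_mul]
    rw [sum_range_numDouble ha]
    omega

/-- Riemann–Hurwitz counting: for `a ≥ 4` branch points with bounds `α k ≥ 2`, there are
infinitely many branching configurations `(d, n)` with `d = ∑ j·n_{j,k}` for each `k` and
`∑ (j-1)·n_{j,k} = 2d - 2`. -/
theorem infinitely_many_branching_data_of_four_points
    (a : ℕ) (ha : 4 ≤ a) (α : ℕ → ℕ) (hα : ∀ k < a, 2 ≤ α k) :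
    {x : ℕ × (ℕ → ℕ → ℕ) |
      1 ≤ x.1 ∧
      (∀ k j, x.2 k j ≠ 0 → k < a ∧ 1 ≤ j ∧ j ≤ α k) ∧
      (∀ k < a, x.1 = ∑ j ∈ Finset.Icc 1 (α k), j * x.2 k j) ∧
      (∑ k ∈ Finset.range a, ∑ j ∈ Finset.Icc 1 (α k), (j - 1) * x.2 k j)
        = 2 * x.1 - 2}.Infinite := by
  refine Set.infinite_of_injective_forall_mem (f := fun t => (2 * t + 2, branchingData a t))
    (fun t s h => ?_) (isBranchingData_branchingData ha hα)
  have := congrArg Prod.fst h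
  simp only at this
  omega
end

section
/- Let α ≥ 2 be an integer. Then there are only finitely many tuples of nonnegative integers (n_{1,1}, n_{2,1}, n_{1,2}, n_{2,2}, n_{1,3}, …, n_{α,3}) and positive integers d satisfying: d = n_{1,1} + 2n_{2,1}, d = n_{1,2} + 2n_{2,2}, d = Σ_{j=1}^{α} j·n_{j,3}, and (n_{2,1}) + (n_{2,2}) + Σ_{j=1}^{α} (j−1)n_{j,3} = 2d−2. -/
/-!
Write `s = ∑ⱼ n_{j,3}` for the number of points over the third branch point. Since
`∑ⱼ (j - 1) n_{j,3} = d - s`, the Riemann–Hurwitz equation reads `n_{2,1} + n_{2,2} + 2 = d + s`,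
and `2 n_{2,k} ≤ d` forces `s ≤ 2`. Hence every `n_{j,3} ≤ 2` and `d ≤ α s ≤ 2α`, which bounds
all the remaining unknowns as well.
-/

open Finset

theorem Set.finite_setOf_support_subset_and_forall_mem {ι M : Type*} [Zero M] {s : Set ι}
    (hs : s.Finite) {t : Set M} (ht : t.Finite) :
    {f : ι → M | Function.support f ⊆ s ∧ ∀ i, f i ∈ t}.Finite := by
  have : Finite s := hs
  refine ((Set.Finite.pi' fun _ : s => ht).subset ?_).of_finite_image (f := fun f (i : s) => f i) ?_
  · rintro _ ⟨f, hf, rfl⟩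
    exact fun i => hf.2 i
  · intro f hf g hg hfg
    funext i
    by_cases hi : i ∈ s
    · exact congrFun hfg ⟨i, hi⟩
    · rw [Function.notMem_support.mp fun h => hi (hf.1 h),
        Function.notMem_support.mp fun h => hi (hg.1 h)]

theorem sum_mul_eq_sum_pred_mul_add_sum {s : Finset ℕ} (hs : ∀ j ∈ s, 1 ≤ j) (f : ℕ → ℕ) :
    ∑ j ∈ s, j * f j = ∑ j ∈ s, (j - 1) * f j + ∑ j ∈ s, f j := by
  rw [← sum_add_distrib]
  refine sum_congr rfl fun j hj => ?_
  obtain ⟨k, rfl⟩ : ∃ k, j = k + 1 := ⟨j - 1, by have := hs j hj; omega⟩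
  simp [add_mul]

theorem sum_le_two_of_riemannHurwitz {s : Finset ℕ} (hs : ∀ j ∈ s, 1 ≤ j) {f : ℕ → ℕ}
    {d a b c e : ℕ} (hb : d = a + 2 * b) (he : d = c + 2 * e) (hf : d = ∑ j ∈ s, j * f j)
    (hRH : b + e + ∑ j ∈ s, (j - 1) * f j = 2 * d - 2) :
    ∑ j ∈ s, f j ≤ 2 := by
  rw [sum_mul_eq_sum_pred_mul_add_sum hs] at hf
  omega

theorem sum_mul_le_mul_sum {s : Finset ℕ} {α : ℕ} (hs : ∀ j ∈ s, j ≤ α) (f : ℕ → ℕ) :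
    ∑ j ∈ s, j * f j ≤ α * ∑ j ∈ s, f j := by
  rw [mul_sum]
  exact sum_le_sum fun j hj => Nat.mul_le_mul_right _ (hs j hj)

theorem finitely_many_branching_data_two_two_alpha_general (α : ℕ) :
    {x : ℕ × ℕ × ℕ × ℕ × (ℕ → ℕ) × ℕ |
      1 ≤ x.2.2.2.2.2 ∧
      (∀ j, x.2.2.2.2.1 j ≠ 0 → 1 ≤ j ∧ j ≤ α) ∧
      x.2.2.2.2.2 = x.1 + 2 * x.2.1 ∧
      x.2.2.2.2.2 = x.2.2.1 + 2 * x.2.2.2.1 ∧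
      x.2.2.2.2.2 = ∑ j ∈ Finset.Icc 1 α, j * x.2.2.2.2.1 j ∧
      x.2.1 + x.2.2.2.1 + ∑ j ∈ Finset.Icc 1 α, (j - 1) * x.2.2.2.2.1 j
        = 2 * x.2.2.2.2.2 - 2}.Finite := by
  set B := Set.Iic (2 * α)
  have hB : B.Finite := Set.finite_Iic _
  refine (hB.prod <| hB.prod <| hB.prod <| hB.prod <|
    (Set.finite_setOf_support_subset_and_forall_mem (Set.finite_Icc 1 α) (Set.finite_Iic 2)).prod
      hB).subset ?_
  rintro ⟨a, b, c, e, f, d⟩ ⟨-, hsupp, hb, he, hf, hRH⟩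
  dsimp only at hsupp hb he hf hRH
  have hsum : ∑ j ∈ Icc 1 α, f j ≤ 2 :=
    sum_le_two_of_riemannHurwitz (fun j hj => (mem_Icc.mp hj).1) hb he hf hRH
  have hd : d ≤ 2 * α :=
    calc d = ∑ j ∈ Icc 1 α, j * f j := hf
      _ ≤ α * ∑ j ∈ Icc 1 α, f j := sum_mul_le_mul_sum (fun j hj => (mem_Icc.mp hj).2) f
      _ ≤ 2 * α := by rw [mul_comm]; exact Nat.mul_le_mul_right α hsum
  have hf_le : ∀ j, f j ≤ 2 := fun j => by
    by_cases hj : f j = 0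
    · omega
    · exact (single_le_sum (fun _ _ => Nat.zero_le _) (mem_Icc.mpr (hsupp j hj))).trans hsum
  simp only [B, Set.mem_prod, Set.mem_Iic, Set.mem_ofPred_eq]
  exact ⟨by omega, by omega, by omega, by omega, ⟨hsupp, hf_le⟩, hd⟩

/-- Finiteness of branching data for coverings of `P^1` branched over three points with
local degrees bounded by `2, 2, α`: the set of tuples
`(n₁₁, n₂₁, n₁₂, n₂₂, n₃, d)` with `d = n₁₁ + 2n₂₁ = n₁₂ + 2n₂₂ = ∑ j·n₃ j` and
`n₂₁ + n₂₂ + ∑ (j-1)·n₃ j = 2d - 2` is finite. -/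
theorem finitely_many_branching_data_two_two_alpha (α : ℕ) (hα : 2 ≤ α) :
    {x : ℕ × ℕ × ℕ × ℕ × (ℕ → ℕ) × ℕ |
      1 ≤ x.2.2.2.2.2 ∧
      (∀ j, x.2.2.2.2.1 j ≠ 0 → 1 ≤ j ∧ j ≤ α) ∧
      x.2.2.2.2.2 = x.1 + 2 * x.2.1 ∧
      x.2.2.2.2.2 = x.2.2.1 + 2 * x.2.2.2.1 ∧
      x.2.2.2.2.2 = ∑ j ∈ Finset.Icc 1 α, j * x.2.2.2.2.1 j ∧
      x.2.1 + x.2.2.2.1 + ∑ j ∈ Finset.Icc 1 α, (j - 1) * x.2.2.2.2.1 j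
        = 2 * x.2.2.2.2.2 - 2}.Finite :=
  finitely_many_branching_data_two_two_alpha_general α
end

section
/- Consider the system in nonnegative integers n_{1,1}, n_{2,1}, n_{1,2}, n_{2,2}, n_{1,3}, …, n_{α,3} (α ≥ 2) with common degree d ≥ 1: d = n_{1,1} + 2n_{2,1} = n_{1,2} + 2n_{2,2} = Σ_{j=1}^{α} j·n_{j,3}, and n_{2,1} + n_{2,2} + Σ_{j=1}^{α}(j−1)n_{j,3} = 2d − 2. Any solution satisfies Σ_{j=1}^{α} n_{j,3} ≤ 2. -/
/-! Over the third branch point the fibre has `d - R` points, where `R = ∑ (j - 1) n_{j,3}` is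
the ramification there. The first two branch points have ramification `n_{2,1}, n_{2,2} ≤ d / 2`,
so Riemann–Hurwitz forces `R ≥ d - 2`. -/

theorem Finset.sum_sub_one_mul_add_sum_eq_sum_mul {s : Finset ℕ} (hs : ∀ j ∈ s, 1 ≤ j)
    (f : ℕ → ℕ) : ∑ j ∈ s, (j - 1) * f j + ∑ j ∈ s, f j = ∑ j ∈ s, j * f j := by
  rw [← Finset.sum_add_distrib]
  refine Finset.sum_congr rfl fun j hj => ?_
  rw [← Nat.succ_mul, Nat.succ_eq_add_one, Nat.sub_add_cancel (hs j hj)]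

theorem third_fiber_size_le_two_general
    (α : ℕ) (n₁₁ n₂₁ n₁₂ n₂₂ d : ℕ) (n₃ : ℕ → ℕ)
    (h₁ : d = n₁₁ + 2 * n₂₁)
    (h₂ : d = n₁₂ + 2 * n₂₂)
    (h₃ : d = ∑ j ∈ Finset.Icc 1 α, j * n₃ j)
    (hRH : n₂₁ + n₂₂ + ∑ j ∈ Finset.Icc 1 α, (j - 1) * n₃ j = 2 * d - 2) :
    ∑ j ∈ Finset.Icc 1 α, n₃ j ≤ 2 := by
  have hfiber := Finset.sum_sub_one_mul_add_sum_eq_sum_mul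
    (s := Finset.Icc 1 α) (fun _ hj => (Finset.mem_Icc.mp hj).1) n₃
  omega

/-- In any Riemann–Hurwitz branching configuration for coverings of `P^1` branched over
three points with local degrees bounded by `2, 2, α`, the number of preimages over the
third branch point is at most `2`. -/
theorem third_fiber_size_le_two
    (α : ℕ) (hα : 2 ≤ α) (n₁₁ n₂₁ n₁₂ n₂₂ d : ℕ) (n₃ : ℕ → ℕ)
    (hd : 1 ≤ d)
    (h₁ : d = n₁₁ + 2 * n₂₁)
    (h₂ : d = n₁₂ + 2 * n₂₂)
    (h₃ : d = ∑ j ∈ Finset.Icc 1 α, j * n₃ j)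
    (hRH : n₂₁ + n₂₂ + ∑ j ∈ Finset.Icc 1 α, (j - 1) * n₃ j = 2 * d - 2) :
    ∑ j ∈ Finset.Icc 1 α, n₃ j ≤ 2 :=
  third_fiber_size_le_two_general α n₁₁ n₂₁ n₁₂ n₂₂ d n₃ h₁ h₂ h₃ hRH
end

section
/- Let α ∈ {3, 4, 5}. Consider nonnegative integers n_{1,1}, n_{2,1} (over the first branch point, local degrees ≤ 2), n_{1,2}, n_{2,2}, n_{3,2} (over the second, local degrees ≤ 3), n_{1,3}, …, n_{α,3} (over the third, local degrees ≤ α) and d ≥ 1 with d = n_{1,1} + 2n_{2,1} = n_{1,2} + 2n_{2,2} + 3n_{3,2} = Σ_{j=1}^{α} j n_{j,3}, and n_{2,1} + (n_{2,2} + 2n_{3,2}) + Σ_{j=1}^{α} (j−1)n_{j,3} = 2d−2. Then the set of all such solutions is finite. -/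
/-!
Over a branch point whose local degrees are at most `m`, the ramification `∑ (j - 1) n_j`
is at most `(m - 1) / m` of the degree `d`. Feeding these three bounds, for `m = 2, 3, α`,
into the Riemann–Hurwitz equation gives `2d - 2 ≤ (1/2 + 2/3 + (α - 1)/α) d`, that is
`(6 - α) d ≤ 12 α`, so `d ≤ 60` when `α ≤ 5`. Every entry of a solution is then at most `d`,
and the multiplicities over the third point vanish outside `[1, α]`.
-/

open Finset in
theorem mul_sum_pred_mul_le_pred_mul_sum_mul {m : ℕ} {s : Finset ℕ} (n : ℕ → ℕ)
    (hs : ∀ j ∈ s, j ≤ m) :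
    m * ∑ j ∈ s, (j - 1) * n j ≤ (m - 1) * ∑ j ∈ s, j * n j := by
  rw [mul_sum, mul_sum]
  refine sum_le_sum fun j hj => ?_
  have hjm : m * (j - 1) ≤ (m - 1) * j := by
    rcases j with _ | k
    · simp
    · have := hs _ hj
      obtain ⟨l, rfl⟩ : ∃ l, m = l + 1 := ⟨m - 1, by omega⟩
      simp only [Nat.add_sub_cancel]
      nlinarith
  calc m * ((j - 1) * n j) = m * (j - 1) * n j := by ring
    _ ≤ (m - 1) * j * n j := Nat.mul_le_mul_right _ hjm
    _ = (m - 1) * (j * n j) := by ring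

theorem six_sub_mul_le_of_riemann_hurwitz {α d a b p q r t : ℕ} (hα : 1 ≤ α)
    (h1 : d = a + 2 * b) (h2 : d = p + 2 * q + 3 * r) (h3 : α * t ≤ (α - 1) * d)
    (hRH : b + (q + 2 * r) + t = 2 * d - 2) :
    (6 - α) * d ≤ 12 * α := by
  rcases le_or_gt 6 α with h6 | h6
  · simp [Nat.sub_eq_zero_of_le h6]
  · interval_cases α <;> omega

theorem Set.Finite.setOf_support_subset_forall_mem {ι β : Type*} [Zero β] {s : Set ι}
    {t : Set β} (hs : s.Finite) (ht : t.Finite) :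
    {f : ι → β | (∀ i, f i ≠ 0 → i ∈ s) ∧ ∀ i, f i ∈ t}.Finite := by
  have : Finite s := hs
  refine Set.Finite.of_finite_image (f := fun f (i : s) => f i) ?_ ?_
  · exact (Set.Finite.pi' fun _ => ht).subset (by rintro _ ⟨f, hf, rfl⟩ i; exact hf.2 i)
  · intro f hf g hg hfg
    funext i
    by_cases hi : i ∈ s
    · exact congrFun hfg ⟨i, hi⟩
    · rw [not_imp_comm.mp (hf.1 i) hi, not_imp_comm.mp (hg.1 i) hi]

/-- A tuple is `((n₁₁, n₂₁), (n₁₂, n₂₂, n₃₂), n₃, d)`. -/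
theorem finitely_many_branching_data_two_three_exceptional
    (α : ℕ) (hα : α = 3 ∨ α = 4 ∨ α = 5) :
    {x : (ℕ × ℕ) × (ℕ × ℕ × ℕ) × (ℕ → ℕ) × ℕ |
      1 ≤ x.2.2.2 ∧
      (∀ j, x.2.2.1 j ≠ 0 → 1 ≤ j ∧ j ≤ α) ∧
      x.2.2.2 = x.1.1 + 2 * x.1.2 ∧
      x.2.2.2 = x.2.1.1 + 2 * x.2.1.2.1 + 3 * x.2.1.2.2 ∧
      x.2.2.2 = ∑ j ∈ Finset.Icc 1 α, j * x.2.2.1 j ∧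
      x.1.2 + (x.2.1.2.1 + 2 * x.2.1.2.2) + ∑ j ∈ Finset.Icc 1 α, (j - 1) * x.2.2.1 j
        = 2 * x.2.2.2 - 2}.Finite := by
  have hB := Set.finite_Iic 60
  refine ((hB.prod hB).prod ((hB.prod (hB.prod hB)).prod
    (((Set.finite_Icc 1 α).setOf_support_subset_forall_mem hB).prod hB))).subset ?_
  rintro ⟨⟨a, b⟩, ⟨p, q, r⟩, n, d⟩ ⟨-, hsupp, h1, h2, h3, hRH⟩
  dsimp only at hsupp h1 h2 h3 hRH
  have hd : d ≤ 60 := calc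
    d ≤ (6 - α) * d := Nat.le_mul_of_pos_left d (by omega)
    _ ≤ 12 * α := six_sub_mul_le_of_riemann_hurwitz (by omega) h1 h2
        (h3 ▸ mul_sum_pred_mul_le_pred_mul_sum_mul n fun j hj => (Finset.mem_Icc.mp hj).2) hRH
    _ ≤ 60 := by omega
  have hn : ∀ j, n j ≤ d := fun j => by
    by_cases hj : n j = 0
    · omega
    · rw [h3]
      exact (Nat.le_mul_of_pos_left _ (hsupp j hj).1).trans <|
        Finset.single_le_sum (f := fun i => i * n i) (fun _ _ => Nat.zero_le _)
          (Finset.mem_Icc.mpr (hsupp j hj))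
  simp only [Set.mem_prod, Set.mem_Iic, Set.mem_ofPred_eq, Set.mem_Icc]
  exact ⟨⟨by omega, by omega⟩, ⟨by omega, by omega, by omega⟩,
    ⟨hsupp, fun j => (hn j).trans hd⟩, hd⟩
end

section
/- For the quotient ring A = ℂ[x,y,z]/(xy, xz, yz, 2x² − 2y², 2x² − r z^r, 2y² − r z^r) with r ≥ 2 an integer, A is a finite-dimensional ℂ-vector space of dimension r + 3, with basis {1, x, y, z, z², …, z^{r−1}, x²}. -/
/-!
Spanning: in `A` the mixed products vanish, `y² = x²` and `r z^r = 2 x²`, whence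
`x³ = y³ = z^(r+1) = 0`, so every monomial is a multiple of a listed one.

Independence: `A` is Gorenstein with socle spanned by the point class. The linear form
`λ = r·coeff_{x²} + r·coeff_{y²} + 2·coeff_{z^r}` kills `q·g` for every generator `g`, hence
the whole ideal, and `(f, g) ↦ λ(fg)` pairs the listed monomials perfectly with the dual
monomials `1 ↔ x²`, `x ↔ x`, `y ↔ y`, `z^k ↔ z^(r-k)`.
-/

open MvPolynomial

/-- The presentation ideal of the orbifold cohomology ring `H*_orb(P^1_{2,2,r})`:
`(xy, xz, yz, 2x² - 2y², 2x² - r z^r, 2y² - r z^r)`. -/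
noncomputable def orbCohomIdeal (r : ℕ) : Ideal (MvPolynomial (Fin 3) ℂ) :=
  Ideal.span
    {X 0 * X 1, X 0 * X 2, X 1 * X 2,
     2 * X 0 ^ 2 - 2 * X 1 ^ 2,
     2 * X 0 ^ 2 - C (r : ℂ) * X 2 ^ r,
     2 * X 1 ^ 2 - C (r : ℂ) * X 2 ^ r}

namespace MvPolynomial

variable {R σ : Type*} [CommSemiring R]

theorem coeff_single_mul_X_mul_X {i j : σ} (hij : i ≠ j) (k : σ) (n : ℕ)
    (q : MvPolynomial σ R) : coeff (Finsupp.single k n) (q * (X i * X j)) = 0 := by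
  rw [X, X, monomial_mul, coeff_mul_monomial', if_neg]
  intro h
  by_cases hik : i = k
  · have := h j
    simp_all
  · have := h i
    simp_all

theorem coeff_single_mul_X_pow_of_ne {i k : σ} (hik : i ≠ k) {m : ℕ} (hm : m ≠ 0)
    (n : ℕ) (q : MvPolynomial σ R) : coeff (Finsupp.single k n) (q * X i ^ m) = 0 := by
  rw [X_pow_eq_monomial, coeff_mul_monomial', if_neg]
  intro h
  have := h i
  simp_all

theorem coeff_single_mul_X_pow_self (i : σ) (n : ℕ) (q : MvPolynomial σ R) :
    coeff (Finsupp.single i n) (q * X i ^ n) = constantCoeff q := by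
  rw [X_pow_eq_monomial, coeff_mul_monomial', if_pos le_rfl, tsub_self, mul_one,
    constantCoeff_eq]

end MvPolynomial

/-- Macaulay's annihilator of `φ`: the largest left ideal contained in `ker φ`. -/
def LinearMap.annihilatorIdeal {R A M : Type*} [Semiring R] [Semiring A] [Module R A]
    [AddCommMonoid M] [Module R M] (φ : A →ₗ[R] M) : Ideal A where
  carrier := {f | ∀ q, φ (q * f) = 0}
  add_mem' {f g} hf hg q := by rw [mul_add, map_add, hf, hg, add_zero]
  zero_mem' q := by rw [mul_zero, map_zero]
  smul_mem' c f hf q := by rw [smul_eq_mul, ← mul_assoc, hf]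

/-- `r` times the coefficient of the point class `p = x² = y² = (r/2) z^r`. -/
noncomputable def socleFunctional (r : ℕ) : MvPolynomial (Fin 3) ℂ →ₗ[ℂ] ℂ :=
  (r : ℂ) • (lcoeff ℂ (Finsupp.single 0 2) + lcoeff ℂ (Finsupp.single 1 2)) +
    (2 : ℂ) • lcoeff ℂ (Finsupp.single 2 r)

theorem socleFunctional_apply (r : ℕ) (f : MvPolynomial (Fin 3) ℂ) :
    socleFunctional r f = r * (coeff (Finsupp.single 0 2) f + coeff (Finsupp.single 1 2) f) +
      2 * coeff (Finsupp.single 2 r) f := rfl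

section SocleFunctional

variable {r : ℕ}

theorem socleFunctional_mul_X_mul_X {i j : Fin 3} (hij : i ≠ j) (q : MvPolynomial (Fin 3) ℂ) :
    socleFunctional r (q * (X i * X j)) = 0 := by
  simp [socleFunctional_apply, coeff_single_mul_X_mul_X hij]

theorem socleFunctional_mul_X_zero_sq (q : MvPolynomial (Fin 3) ℂ) :
    socleFunctional r (q * X 0 ^ 2) = r * constantCoeff q := by
  simp [socleFunctional_apply, coeff_single_mul_X_pow_self,
    coeff_single_mul_X_pow_of_ne (show (0 : Fin 3) ≠ 1 by decide),
    coeff_single_mul_X_pow_of_ne (show (0 : Fin 3) ≠ 2 by decide)]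

theorem socleFunctional_mul_X_one_sq (q : MvPolynomial (Fin 3) ℂ) :
    socleFunctional r (q * X 1 ^ 2) = r * constantCoeff q := by
  simp [socleFunctional_apply, coeff_single_mul_X_pow_self,
    coeff_single_mul_X_pow_of_ne (show (1 : Fin 3) ≠ 0 by decide),
    coeff_single_mul_X_pow_of_ne (show (1 : Fin 3) ≠ 2 by decide)]

theorem socleFunctional_mul_X_two_pow (hr : r ≠ 0) (q : MvPolynomial (Fin 3) ℂ) :
    socleFunctional r (q * X 2 ^ r) = 2 * constantCoeff q := by
  simp [socleFunctional_apply, coeff_single_mul_X_pow_self,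
    coeff_single_mul_X_pow_of_ne (show (2 : Fin 3) ≠ 0 by decide) hr,
    coeff_single_mul_X_pow_of_ne (show (2 : Fin 3) ≠ 1 by decide) hr]

theorem orbCohomIdeal_le_annihilatorIdeal (hr : r ≠ 0) :
    orbCohomIdeal r ≤ (socleFunctional r).annihilatorIdeal := by
  have hmul : ∀ (f g : MvPolynomial (Fin 3) ℂ) (a b : ℂ) q,
      q * (C a * f - C b * g) = a • (q * f) - b • (q * g) := by
    intros; simp only [smul_eq_C_mul]; ring
  refine Ideal.span_le.mpr ?_
  simp only [Set.insert_subset_iff, Set.singleton_subset_iff]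
  refine ⟨fun q => socleFunctional_mul_X_mul_X (by decide) q,
    fun q => socleFunctional_mul_X_mul_X (by decide) q,
    fun q => socleFunctional_mul_X_mul_X (by decide) q, fun q => ?_, fun q => ?_, fun q => ?_⟩
  · rw [← map_ofNat C, hmul, map_sub, map_smul, map_smul, socleFunctional_mul_X_zero_sq,
      socleFunctional_mul_X_one_sq, sub_self]
  · rw [← map_ofNat C, hmul, map_sub, map_smul, map_smul, socleFunctional_mul_X_zero_sq,
      socleFunctional_mul_X_two_pow hr, smul_eq_mul, smul_eq_mul]
    ring
  · rw [← map_ofNat C, hmul, map_sub, map_smul, map_smul, socleFunctional_mul_X_one_sq,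
      socleFunctional_mul_X_two_pow hr, smul_eq_mul, smul_eq_mul]
    ring

end SocleFunctional

noncomputable def orbBasisPoly (r : ℕ) (i : Fin (r + 3)) : MvPolynomial (Fin 3) ℂ :=
  if (i : ℕ) = 0 then 1
  else if (i : ℕ) = 1 then X 0
  else if (i : ℕ) = 2 then X 1
  else if (i : ℕ) = r + 2 then X 0 ^ 2
  else X 2 ^ ((i : ℕ) - 2)

noncomputable def monomial3 (e : ℕ × ℕ × ℕ) : MvPolynomial (Fin 3) ℂ :=
  X 0 ^ e.1 * X 1 ^ e.2.1 * X 2 ^ e.2.2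

theorem monomial3_add (e e' : ℕ × ℕ × ℕ) :
    monomial3 (e + e') = monomial3 e * monomial3 e' := by
  simp only [monomial3, Prod.fst_add, Prod.snd_add, pow_add]
  ring

theorem monomial3_eq_monomial (a b c : ℕ) :
    monomial3 (a, b, c) =
      monomial (Finsupp.single 0 a + Finsupp.single 1 b + Finsupp.single 2 c) 1 := by
  simp only [monomial3, X_pow_eq_monomial, monomial_mul, mul_one]

theorem single_add_single_add_single_eq_iff {a b c a' b' c' : ℕ} :
    Finsupp.single (0 : Fin 3) a + Finsupp.single 1 b + Finsupp.single 2 c =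
        Finsupp.single 0 a' + Finsupp.single 1 b' + Finsupp.single 2 c' ↔
      (a, b, c) = (a', b', c') := by
  refine ⟨fun h => ?_, fun h => by simp_all⟩
  have h0 := DFunLike.congr_fun h 0
  have h1 := DFunLike.congr_fun h 1
  have h2 := DFunLike.congr_fun h 2
  simp at h0 h1 h2
  simp [h0, h1, h2]

theorem socleFunctional_monomial3 (r : ℕ) (e : ℕ × ℕ × ℕ) :
    socleFunctional r (monomial3 e) =
      r * ((if e = (2, 0, 0) then 1 else 0) + (if e = (0, 2, 0) then 1 else 0)) +
        2 * (if e = (0, 0, r) then 1 else 0) := by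
  obtain ⟨a, b, c⟩ := e
  have h (a' b' c' : ℕ) : coeff (Finsupp.single 0 a' + Finsupp.single 1 b' + Finsupp.single 2 c')
      (monomial3 (a, b, c)) = if (a, b, c) = (a', b', c') then 1 else 0 := by
    rw [monomial3_eq_monomial, coeff_monomial]
    simp only [single_add_single_add_single_eq_iff]
  have := h 2 0 0
  have := h 0 2 0
  have := h 0 0 r
  simp_all [socleFunctional_apply]

def basisExponent (r i : ℕ) : ℕ × ℕ × ℕ :=
  if i = 0 then (0, 0, 0)
  else if i = 1 then (1, 0, 0)
  else if i = 2 then (0, 1, 0)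
  else if i = r + 2 then (2, 0, 0)
  else (0, 0, i - 2)

def dualExponent (r i : ℕ) : ℕ × ℕ × ℕ :=
  if i = 0 then (2, 0, 0)
  else if i = 1 then (1, 0, 0)
  else if i = 2 then (0, 1, 0)
  else if i = r + 2 then (0, 0, 0)
  else (0, 0, r + 2 - i)

theorem orbBasisPoly_eq_monomial3 (r : ℕ) (i : Fin (r + 3)) :
    orbBasisPoly r i = monomial3 (basisExponent r i) := by
  unfold orbBasisPoly basisExponent
  split_ifs <;> simp [monomial3]

theorem socleFunctional_dual_mul_basis_eq_zero_iff {r : ℕ} (hr : r ≠ 0) (i j : Fin (r + 3)) :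
    socleFunctional r (monomial3 (dualExponent r i) * orbBasisPoly r j) = 0 ↔ i ≠ j := by
  obtain ⟨i, hi⟩ := i
  obtain ⟨j, hj⟩ := j
  rw [orbBasisPoly_eq_monomial3, ← monomial3_add, socleFunctional_monomial3, Ne, Fin.mk.injEq]
  simp only [dualExponent, basisExponent]
  split_ifs <;> simp_all <;> omega

theorem natCast_mul_eq_zero_iff (K : Type*) {A : Type*} [Field K] [CharZero K] [Ring A]
    [Algebra K A] {n : ℕ} (hn : n ≠ 0) {a : A} : (n : A) * a = 0 ↔ a = 0 := by
  rw [← nsmul_eq_mul, ← Nat.cast_smul_eq_nsmul K, smul_eq_zero]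
  simp [hn]

section Quotient

variable {r : ℕ}

local notation "𝒜" => MvPolynomial (Fin 3) ℂ ⧸ orbCohomIdeal r

local notation "π" => Ideal.Quotient.mk (orbCohomIdeal r)

theorem mk_eq_zero_of_mem_generators {p : MvPolynomial (Fin 3) ℂ}
    (hp : p ∈ ({X 0 * X 1, X 0 * X 2, X 1 * X 2, 2 * X 0 ^ 2 - 2 * X 1 ^ 2,
      2 * X 0 ^ 2 - C (r : ℂ) * X 2 ^ r, 2 * X 1 ^ 2 - C (r : ℂ) * X 2 ^ r} :
        Set (MvPolynomial (Fin 3) ℂ))) : π p = 0 :=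
  Ideal.Quotient.eq_zero_iff_mem.mpr (Ideal.subset_span hp)

theorem mk_X_zero_mul_X_one : π (X 0) * π (X 1) = 0 := by
  rw [← map_mul]; exact mk_eq_zero_of_mem_generators (by simp)

theorem mk_X_zero_mul_X_two : π (X 0) * π (X 2) = 0 := by
  rw [← map_mul]; exact mk_eq_zero_of_mem_generators (by simp)

theorem mk_X_one_mul_X_two : π (X 1) * π (X 2) = 0 := by
  rw [← map_mul]; exact mk_eq_zero_of_mem_generators (by simp)

theorem mk_X_one_sq : π (X 1) ^ 2 = π (X 0) ^ 2 := by
  have h := mk_eq_zero_of_mem_generators (r := r) (p := 2 * X 0 ^ 2 - 2 * X 1 ^ 2) (by simp)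
  simp only [map_sub, map_mul, map_pow, map_ofNat] at h
  rw [← sub_eq_zero, ← natCast_mul_eq_zero_iff ℂ two_ne_zero]
  linear_combination -h

theorem natCast_mul_mk_X_two_pow : (r : 𝒜) * π (X 2) ^ r = 2 * π (X 0) ^ 2 := by
  have h := mk_eq_zero_of_mem_generators (r := r) (p := 2 * X 0 ^ 2 - C (r : ℂ) * X 2 ^ r)
    (by simp)
  simp only [map_sub, map_mul, map_pow, map_ofNat, map_natCast] at h
  linear_combination -h

theorem mk_X_zero_pow_three (hr : r ≠ 0) : π (X 0) ^ 3 = 0 := by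
  have hw : π (X 2) ^ r = π (X 2) ^ (r - 1) * π (X 2) := by
    rw [← pow_succ, Nat.sub_add_cancel (Nat.one_le_iff_ne_zero.mpr hr)]
  rw [← natCast_mul_eq_zero_iff ℂ two_ne_zero]
  linear_combination (-π (X 0)) * natCast_mul_mk_X_two_pow (r := r) +
    ((r : 𝒜) * π (X 0)) * hw +
    ((r : 𝒜) * π (X 2) ^ (r - 1)) * mk_X_zero_mul_X_two

theorem mk_X_one_pow_three : π (X 1) ^ 3 = 0 := by
  linear_combination π (X 1) * mk_X_one_sq (r := r) + π (X 0) * mk_X_zero_mul_X_one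

theorem mk_X_two_pow_succ (hr : r ≠ 0) : π (X 2) ^ (r + 1) = 0 := by
  rw [← natCast_mul_eq_zero_iff ℂ hr]
  linear_combination π (X 2) * natCast_mul_mk_X_two_pow (r := r) +
    2 * π (X 0) * mk_X_zero_mul_X_two

theorem mk_smul (c : ℂ) (p : MvPolynomial (Fin 3) ℂ) : π (c • p) = c • π p := by
  rw [← Ideal.Quotient.mkₐ_eq_mk ℂ, map_smul]

noncomputable def orbBasisVector (r : ℕ) (i : Fin (r + 3)) :
    MvPolynomial (Fin 3) ℂ ⧸ orbCohomIdeal r :=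
  Ideal.Quotient.mk (orbCohomIdeal r) (orbBasisPoly r i)

local notation "S" => Submodule.span ℂ (Set.range (orbBasisVector r))

theorem orbBasisVector_mem_span (i : Fin (r + 3)) : orbBasisVector r i ∈ S :=
  Submodule.subset_span ⟨i, rfl⟩

theorem mk_X_zero_pow_mem_span (hr : r ≠ 0) (a : ℕ) : π (X 0) ^ a ∈ S := by
  match a with
  | 0 => simpa [orbBasisVector, orbBasisPoly] using orbBasisVector_mem_span (r := r) 0
  | 1 => simpa [orbBasisVector, orbBasisPoly] using orbBasisVector_mem_span (r := r) 1
  | 2 => simpa [orbBasisVector, orbBasisPoly, hr] using orbBasisVector_mem_span (r := r) (.last _)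
  | a + 3 => simp [pow_add, mk_X_zero_pow_three hr]

theorem mk_X_one_pow_mem_span (hr : r ≠ 0) (b : ℕ) : π (X 1) ^ b ∈ S := by
  match b with
  | 0 => exact mk_X_zero_pow_mem_span hr 0
  | 1 =>
    simpa [orbBasisVector, orbBasisPoly] using orbBasisVector_mem_span (r := r) ⟨2, by omega⟩
  | 2 => rw [mk_X_one_sq]; exact mk_X_zero_pow_mem_span hr 2
  | b + 3 => simp [pow_add, mk_X_one_pow_three]

theorem mk_X_two_pow_mem_span (hr : r ≠ 0) (c : ℕ) : π (X 2) ^ c ∈ S := by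
  obtain hc | hc | hc := lt_trichotomy c r
  · obtain rfl | hc0 := eq_or_ne c 0
    · exact mk_X_zero_pow_mem_span hr 0
    · have := orbBasisVector_mem_span (r := r) ⟨c + 2, by omega⟩
      simpa [orbBasisVector, orbBasisPoly, hc0, hc.ne] using this
  · have hw : π (X 2) ^ r = ((r : ℂ)⁻¹ * 2) • π (X 0) ^ 2 := by
      rw [mul_smul, eq_inv_smul_iff₀ (Nat.cast_ne_zero.mpr hr), Nat.cast_smul_eq_nsmul,
        nsmul_eq_mul, natCast_mul_mk_X_two_pow, two_smul, two_mul]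
    rw [hc, hw]
    exact Submodule.smul_mem S _ (mk_X_zero_pow_mem_span hr 2)
  · obtain ⟨d, rfl⟩ := Nat.exists_eq_add_of_lt hc
    rw [add_right_comm, pow_add, mk_X_two_pow_succ hr, zero_mul]
    exact Submodule.zero_mem S

theorem mk_X_pow_mul_X_pow_mul_X_pow_mem_span (hr : r ≠ 0) (a b c : ℕ) :
    π (X 0) ^ a * π (X 1) ^ b * π (X 2) ^ c ∈ S := by
  obtain _ | a := a <;> obtain _ | b := b <;> obtain _ | c := c
  · simpa using mk_X_zero_pow_mem_span hr 0
  · simpa using mk_X_two_pow_mem_span hr (c + 1)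
  · simpa using mk_X_one_pow_mem_span hr (b + 1)
  · rw [show π (X 0) ^ 0 * π (X 1) ^ (b + 1) * π (X 2) ^ (c + 1) =
        π (X 1) * π (X 2) * (π (X 1) ^ b * π (X 2) ^ c) by ring, mk_X_one_mul_X_two, zero_mul]
    exact Submodule.zero_mem S
  · simpa using mk_X_zero_pow_mem_span hr (a + 1)
  · rw [show π (X 0) ^ (a + 1) * π (X 1) ^ 0 * π (X 2) ^ (c + 1) =
        π (X 0) * π (X 2) * (π (X 0) ^ a * π (X 2) ^ c) by ring, mk_X_zero_mul_X_two, zero_mul]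
    exact Submodule.zero_mem S
  all_goals
    rw [show ∀ c, π (X 0) ^ (a + 1) * π (X 1) ^ (b + 1) * π (X 2) ^ c =
        π (X 0) * π (X 1) * (π (X 0) ^ a * π (X 1) ^ b * π (X 2) ^ c) by intro; ring,
      mk_X_zero_mul_X_one, zero_mul]
    exact Submodule.zero_mem S

theorem span_orbBasisVector (hr : r ≠ 0) : S = ⊤ := by
  refine eq_top_iff.mpr ?_
  rintro f -
  obtain ⟨p, rfl⟩ := Ideal.Quotient.mk_surjective f
  induction p using MvPolynomial.induction_on' with
  | monomial m c =>
    rw [monomial_eq, Finsupp.prod_fintype _ _ (fun _ => pow_zero _), Fin.prod_univ_three,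
      ← smul_eq_C_mul, mk_smul, map_mul, map_mul, map_pow, map_pow, map_pow]
    exact Submodule.smul_mem S c (mk_X_pow_mul_X_pow_mul_X_pow_mem_span hr _ _ _)
  | add p q hp hq => rw [map_add]; exact Submodule.add_mem S hp hq

theorem linearIndependent_orbBasisVector (hr : r ≠ 0) :
    LinearIndependent ℂ (orbBasisVector r) := by
  refine Fintype.linearIndependent_iff.mpr fun g hg i => ?_
  have hmem : ∑ j, g j • orbBasisPoly r j ∈ orbCohomIdeal r := by
    rw [← Ideal.Quotient.eq_zero_iff_mem, map_sum]
    simpa only [mk_smul, orbBasisVector] using hg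
  have hpair := orbCohomIdeal_le_annihilatorIdeal hr hmem (monomial3 (dualExponent r i))
  rw [Finset.mul_sum, map_sum, Finset.sum_eq_single i] at hpair
  · rw [mul_smul_comm, map_smul, smul_eq_mul, mul_eq_zero] at hpair
    exact hpair.resolve_right (by simp [socleFunctional_dual_mul_basis_eq_zero_iff hr])
  · intro j _ hji
    rw [mul_smul_comm, map_smul, (socleFunctional_dual_mul_basis_eq_zero_iff hr i j).mpr hji.symm,
      smul_zero]
  · simp

end Quotient

/-- `A = ℂ[x,y,z]/(xy, xz, yz, 2x²-2y², 2x²-rz^r, 2y²-rz^r)` is a `ℂ`-vector space of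
dimension `r + 3`, with basis `{1, x, y, z, z², …, z^{r-1}, x²}`. -/
theorem orbCohom_dimension (r : ℕ) (hr : 2 ≤ r) :
    FiniteDimensional ℂ (MvPolynomial (Fin 3) ℂ ⧸ orbCohomIdeal r) ∧
    Module.finrank ℂ (MvPolynomial (Fin 3) ℂ ⧸ orbCohomIdeal r) = r + 3 ∧
    ∃ B : Module.Basis (Fin (r + 3)) ℂ (MvPolynomial (Fin 3) ℂ ⧸ orbCohomIdeal r),
      ∀ i : Fin (r + 3),
        B i = Ideal.Quotient.mk (orbCohomIdeal r)
          (if (i : ℕ) = 0 then 1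
           else if (i : ℕ) = 1 then X 0
           else if (i : ℕ) = 2 then X 1
           else if (i : ℕ) = r + 2 then X 0 ^ 2
           else X 2 ^ ((i : ℕ) - 2)) := by
  have hr0 : r ≠ 0 := by omega
  let B := Module.Basis.mk (linearIndependent_orbBasisVector hr0)
    (span_orbBasisVector hr0).ge
  refine ⟨B.finiteDimensional_of_finite, ?_, B, Module.Basis.mk_apply _ _⟩
  rw [Module.finrank_eq_card_basis B, Fintype.card_fin]
end
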